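/- arXiv:2406.00710 — 2 statements merged into one kernel-verified Lean document; each statement's English description precedes it below -/
import Mathlib

section
/- For every n ≥ 2, the power graph of the generalised quaternion group Q_{2^{n+1}} is isomorphic (as a simple graph) to the commuting graph of the dihedral group D_{2·2^n} of the same order 2^{n+1}; an isomorphism is given by the vertex map h^i x^j ↦ a^i b^j. -/
/-!
In `Q_{2^{n+1}}` the elements `h^i` form a cyclic `2`-group, in which of any two elements one is
a power of the other, while the powers of `x h^j` are `1, h^{2^{n-1}}, x h^j, x h^{j + 2^{n-1}}`.
In `D_{2^{n+1}}` the rotations commute, `a^i` commutes with `b a^j` iff `a^{2i} = 1`, and `b a^i`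
commutes with `b a^j` iff `a^{2(j-i)} = 1`. As `h^{2i} = 1` iff `h^i ∈ {1, h^{2^{n-1}}}`, the map
`h^i x^j ↦ a^i b^j` matches the two adjacency relations case by case.
-/

/-- The power graph of a group: distinct `x`, `y` are adjacent iff one is a power of the other. -/
def powerGraph (G : Type*) [Group G] : SimpleGraph G where
  Adj x y := x ≠ y ∧ ((∃ k : ℤ, x = y ^ k) ∨ (∃ k : ℤ, y = x ^ k))
  symm := by
    constructor
    rintro x y ⟨hne, h | h⟩
    · exact ⟨hne.symm, Or.inr h⟩
    · exact ⟨hne.symm, Or.inl h⟩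
  loopless := by constructor; rintro x ⟨hne, -⟩; exact hne rfl

/-- The commuting graph of a group: distinct `x`, `y` are adjacent iff they commute. -/
def commutingGraph (G : Type*) [Group G] : SimpleGraph G where
  Adj x y := x ≠ y ∧ x * y = y * x
  symm := by constructor; rintro x y ⟨hne, h⟩; exact ⟨hne.symm, h.symm⟩
  loopless := by constructor; rintro x ⟨hne, -⟩; exact hne rfl

/-- The enhanced power graph of a group: distinct `x`, `y` are adjacent iff `⟨x, y⟩` is cyclic. -/
def enhancedPowerGraph (G : Type*) [Group G] : SimpleGraph G where
  Adj x y := x ≠ y ∧ IsCyclic ↥(Subgroup.closure {x, y})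
  symm := by constructor; rintro x y ⟨hne, h⟩; rw [Set.pair_comm] at h; exact ⟨hne.symm, h⟩
  loopless := by constructor; rintro x ⟨hne, -⟩; exact hne rfl

lemma powerGraph_adj {G : Type*} [Group G] {x y : G} :
    (powerGraph G).Adj x y ↔ x ≠ y ∧ ((∃ k : ℤ, x = y ^ k) ∨ (∃ k : ℤ, y = x ^ k)) :=
  Iff.rfl

lemma commutingGraph_adj {G : Type*} [Group G] {x y : G} :
    (commutingGraph G).Adj x y ↔ x ≠ y ∧ x * y = y * x :=
  Iff.rfl

namespace ZMod

lemma dvd_of_gcd_val_dvd_val {N : ℕ} [NeZero N] {i j : ZMod N}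
    (h : Nat.gcd i.val N ∣ j.val) : i ∣ j := by
  obtain ⟨c, hc⟩ := h
  refine ⟨i⁻¹ * c, ?_⟩
  rw [← natCast_zmod_val j, hc, Nat.cast_mul, ← mul_inv_eq_gcd, mul_assoc]

/-- Each element of `ZMod (p ^ e)` is associated to `p ^ a` with `p ^ a = gcd (val i) (p ^ e)`,
and powers of `p` are totally ordered by divisibility. -/
lemma dvd_total_of_isPrimePow {N : ℕ} (hN : IsPrimePow N) (i j : ZMod N) : i ∣ j ∨ j ∣ i := by
  obtain ⟨p, e, hp, -, rfl⟩ := hN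
  have hp : p.Prime := Nat.prime_iff.mpr hp
  have : NeZero (p ^ e) := ⟨pow_ne_zero _ hp.ne_zero⟩
  obtain ⟨a, -, ha⟩ := (Nat.dvd_prime_pow hp).1 (Nat.gcd_dvd_right i.val (p ^ e))
  obtain ⟨b, -, hb⟩ := (Nat.dvd_prime_pow hp).1 (Nat.gcd_dvd_right j.val (p ^ e))
  rcases le_total a b with hab | hab
  · left
    apply dvd_of_gcd_val_dvd_val
    rw [ha]
    exact (pow_dvd_pow p hab).trans (hb ▸ Nat.gcd_dvd_left _ _)
  · right
    apply dvd_of_gcd_val_dvd_val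
    rw [hb]
    exact (pow_dvd_pow p hab).trans (ha ▸ Nat.gcd_dvd_left _ _)

lemma two_mul_natCast_self (M : ℕ) : 2 * (M : ZMod (2 * M)) = 0 := by
  exact_mod_cast natCast_self (2 * M)

lemma two_mul_eq_zero_iff_eq_zero_or_eq_natCast {M : ℕ} [NeZero M] {i : ZMod (2 * M)} :
    2 * i = 0 ↔ i = 0 ∨ i = M := by
  refine ⟨fun h => ?_, ?_⟩
  · rw [← natCast_zmod_val i] at h ⊢
    have hdvd : M ∣ i.val := by
      have := (natCast_eq_zero_iff (2 * i.val) (2 * M)).1 (by exact_mod_cast h)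
      exact (Nat.mul_dvd_mul_iff_left two_pos).1 this
    obtain ⟨c, hc⟩ := hdvd
    have hc2 : c < 2 := by
      have := val_lt i
      rw [hc] at this
      exact lt_of_mul_lt_mul_left (by linarith) (Nat.zero_le M)
    interval_cases c <;> simp [hc]
  · rintro (rfl | rfl)
    · exact mul_zero 2
    · exact two_mul_natCast_self M

end ZMod

namespace QuaternionGroup

variable {M : ℕ}

@[simp]
theorem a_pow (i : ZMod (2 * M)) (k : ℕ) : a i ^ k = a (i * k : ZMod (2 * M)) := by
  induction k with
  | zero => simp only [pow_zero, Nat.cast_zero, mul_zero, a_zero]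
  | succ k ih => rw [pow_succ, ih, a_mul_a, Nat.cast_succ, mul_add_one]

@[simp]
theorem inv_a (i : ZMod (2 * M)) : (a i)⁻¹ = a (-i) :=
  rfl

@[simp]
theorem a_zpow (i : ZMod (2 * M)) (k : ℤ) : a i ^ k = a (i * k : ZMod (2 * M)) := by
  obtain ⟨k, rfl | rfl⟩ := k.eq_nat_or_neg <;> simp

theorem xa_zpow_two_mul (j : ZMod (2 * M)) (q : ℤ) :
    xa j ^ (2 * q) = a (M * q : ZMod (2 * M)) := by
  rw [zpow_mul, zpow_two, ← sq, xa_sq, a_zpow]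

theorem xa_zpow_two_mul_add_one (j : ZMod (2 * M)) (q : ℤ) :
    xa j ^ (2 * q + 1) = xa (j - M * q : ZMod (2 * M)) := by
  rw [zpow_add_one, xa_zpow_two_mul, a_mul_xa]

lemma exists_a_eq_xa_zpow_iff [NeZero M] {i j : ZMod (2 * M)} :
    (∃ k : ℤ, a i = xa j ^ k) ↔ 2 * i = 0 := by
  constructor
  · rintro ⟨k, hk⟩
    obtain ⟨q, rfl | rfl⟩ := Int.even_or_odd' k
    · rw [xa_zpow_two_mul, a.injEq] at hk
      rw [hk, ← mul_assoc, ZMod.two_mul_natCast_self, zero_mul]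
    · simp [xa_zpow_two_mul_add_one] at hk
  · rw [ZMod.two_mul_eq_zero_iff_eq_zero_or_eq_natCast]
    rintro (rfl | rfl)
    · exact ⟨0, by rw [zpow_zero, one_def]⟩
    · exact ⟨2, by rw [zpow_ofNat, xa_sq]⟩

lemma exists_xa_eq_xa_zpow_iff [NeZero M] {i j : ZMod (2 * M)} :
    (∃ k : ℤ, xa i = xa j ^ k) ↔ 2 * (j - i) = 0 := by
  constructor
  · rintro ⟨k, hk⟩
    obtain ⟨q, rfl | rfl⟩ := Int.even_or_odd' k
    · simp [xa_zpow_two_mul] at hk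
    · rw [xa_zpow_two_mul_add_one, xa.injEq] at hk
      rw [hk, sub_sub_cancel, ← mul_assoc, ZMod.two_mul_natCast_self, zero_mul]
  · rw [ZMod.two_mul_eq_zero_iff_eq_zero_or_eq_natCast, sub_eq_zero, sub_eq_iff_eq_add]
    rintro (rfl | rfl)
    · exact ⟨1, (zpow_one _).symm⟩
    · refine ⟨2 * 1 + 1, ?_⟩
      rw [xa_zpow_two_mul_add_one, Int.cast_one, mul_one, add_sub_cancel_left]

lemma powerGraph_adj_a_a (hM : IsPrimePow (2 * M)) {i j : ZMod (2 * M)} :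
    (powerGraph (QuaternionGroup M)).Adj (a i) (a j) ↔ i ≠ j := by
  rw [powerGraph_adj, ne_eq, a.injEq]
  refine and_iff_left_of_imp fun _ => ?_
  rcases ZMod.dvd_total_of_isPrimePow hM j i with ⟨c, hc⟩ | ⟨c, hc⟩
  · exact Or.inl ⟨ZMod.cast c, by rw [a_zpow, ZMod.intCast_zmod_cast, hc]⟩
  · exact Or.inr ⟨ZMod.cast c, by rw [a_zpow, ZMod.intCast_zmod_cast, hc]⟩

lemma powerGraph_adj_a_xa [NeZero M] {i j : ZMod (2 * M)} :
    (powerGraph (QuaternionGroup M)).Adj (a i) (xa j) ↔ 2 * i = 0 := by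
  simp [powerGraph_adj, exists_a_eq_xa_zpow_iff]

lemma powerGraph_adj_xa_xa [NeZero M] {i j : ZMod (2 * M)} :
    (powerGraph (QuaternionGroup M)).Adj (xa i) (xa j) ↔ i ≠ j ∧ 2 * (j - i) = 0 := by
  simp only [powerGraph_adj, ne_eq, xa.injEq, exists_xa_eq_xa_zpow_iff]
  rw [← neg_sub j i, mul_neg, neg_eq_zero, or_self]

end QuaternionGroup

namespace DihedralGroup

variable {N : ℕ}

lemma commutingGraph_adj_r_r {i j : ZMod N} :
    (commutingGraph (DihedralGroup N)).Adj (r i) (r j) ↔ i ≠ j := by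
  simp [commutingGraph_adj, add_comm]

lemma commutingGraph_adj_r_sr {i j : ZMod N} :
    (commutingGraph (DihedralGroup N)).Adj (r i) (sr j) ↔ 2 * i = 0 := by
  simp only [commutingGraph_adj, ne_eq, reduceCtorEq, not_false_eq_true, true_and, r_mul_sr,
    sr_mul_r, sr.injEq]
  constructor <;> intro h <;> linear_combination -h

lemma commutingGraph_adj_sr_sr {i j : ZMod N} :
    (commutingGraph (DihedralGroup N)).Adj (sr i) (sr j) ↔ i ≠ j ∧ 2 * (j - i) = 0 := by
  simp only [commutingGraph_adj, ne_eq, sr.injEq, sr_mul_sr, r.injEq]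
  exact and_congr_right fun _ =>
    ⟨fun h => by linear_combination h, fun h => by linear_combination h⟩

end DihedralGroup

namespace QuaternionGroup

open DihedralGroup

variable {M : ℕ}

/-- In Mathlib's presentations `a i = h^i`, `xa i = x h^i`, `r i = a^i` and `sr i = b a^i`,
so this is the vertex map `h^i x^j ↦ a^i b^j`. -/
def equivDihedralGroup (M : ℕ) : QuaternionGroup M ≃ DihedralGroup (2 * M) where
  toFun
    | a i => r i
    | xa i => sr i
  invFun
    | r i => a i
    | sr i => xa i
  left_inv := by rintro (i | i) <;> rfl
  right_inv := by rintro (i | i) <;> rfl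

def powerGraphIsoCommutingGraph (hM : IsPrimePow (2 * M)) :
    powerGraph (QuaternionGroup M) ≃g commutingGraph (DihedralGroup (2 * M)) where
  toEquiv := equivDihedralGroup M
  map_rel_iff' := by
    have : NeZero M := ⟨by rintro rfl; exact hM.ne_zero rfl⟩
    rintro (i | i) (j | j)
    · exact commutingGraph_adj_r_r.trans (powerGraph_adj_a_a hM).symm
    · exact commutingGraph_adj_r_sr.trans powerGraph_adj_a_xa.symm
    · rw [SimpleGraph.adj_comm, (powerGraph _).adj_comm]
      exact commutingGraph_adj_r_sr.trans powerGraph_adj_a_xa.symm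
    · exact commutingGraph_adj_sr_sr.trans powerGraph_adj_xa_xa.symm

theorem exists_powerGraph_iso_commutingGraph_dihedralGroup {N : ℕ} (hMN : 2 * M = N)
    (hN : IsPrimePow N) :
    ∃ e : powerGraph (QuaternionGroup M) ≃g commutingGraph (DihedralGroup N),
      (∀ i, e (a i) = r (i.val : ZMod N)) ∧ ∀ i, e (xa i) = sr (i.val : ZMod N) := by
  subst hMN
  have : NeZero (2 * M) := ⟨hN.ne_zero⟩
  exact ⟨powerGraphIsoCommutingGraph hN, fun i => congrArg r (ZMod.natCast_zmod_val i).symm,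
    fun i => congrArg sr (ZMod.natCast_zmod_val i).symm⟩

end QuaternionGroup

open QuaternionGroup DihedralGroup in
/-- For n ≥ 2, the power graph of `Q_{2^(n+1)}` is isomorphic to the commuting graph of
`D_{2·2^n}`, via the vertex map `h^i x^j ↦ a^i b^j`. -/
theorem stmt10 (n : ℕ) (hn : 2 ≤ n) :
    ∃ e : powerGraph (QuaternionGroup (2 ^ (n - 1))) ≃g
        commutingGraph (DihedralGroup (2 ^ n)),
      (∀ i : ZMod (2 * 2 ^ (n - 1)), e (a i) = r (i.val : ZMod (2 ^ n))) ∧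
        (∀ i : ZMod (2 * 2 ^ (n - 1)),
          e (a i * xa 0) = r (i.val : ZMod (2 ^ n)) * sr 0) := by
  have hpow : 2 * 2 ^ (n - 1) = 2 ^ n := by rw [← pow_succ']; congr 1; omega
  obtain ⟨e, he_a, he_xa⟩ := exists_powerGraph_iso_commutingGraph_dihedralGroup hpow
    (Nat.prime_two.isPrimePow.pow (by omega))
  refine ⟨e, he_a, fun i => ?_⟩
  rw [a_mul_xa, he_xa, r_mul_sr, ZMod.natCast_val, ZMod.natCast_val,
    ZMod.cast_sub (hpow ▸ dvd_rfl), ZMod.cast_zero]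
end

section
/- For every m ≥ 2, the enhanced power graph of the dicyclic group Q_{4m} equals its commuting graph: distinct elements of Q_{4m} commute if and only if they generate a cyclic subgroup. -/
/-!
The elements `a i` all lie in the cyclic subgroup generated by `a 1`. An element `a i` commutes
with some `xa j` only when `i = 0` or `i = n`, and then it is `1` or `xa j ^ 2`; two elements
`xa i`, `xa j` commute only when `xa j` is `xa i` or `xa i ^ 3 = xa (i + n)`. So every commuting
pair lies in a single cyclic subgroup; conversely, a cyclic subgroup is abelian.
-/

theorem ZMod.add_self_eq_zero_iff {n : ℕ} (i : ZMod (2 * n)) :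
    i + i = 0 ↔ i = 0 ∨ i = n := by
  obtain ⟨k, rfl⟩ := ZMod.intCast_surjective i
  rw [← Int.cast_add, ← Int.cast_natCast, ZMod.intCast_zmod_eq_zero_iff_dvd,
    ZMod.intCast_zmod_eq_zero_iff_dvd, ZMod.intCast_eq_intCast_iff_dvd_sub]
  push_cast
  rw [← two_mul, mul_dvd_mul_iff_left two_ne_zero]
  constructor
  · rintro ⟨c, rfl⟩
    obtain ⟨d, rfl | rfl⟩ := Int.even_or_odd' c
    · exact Or.inl ⟨d, by ring⟩
    · exact Or.inr ⟨-d, by ring⟩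
  · rintro (h | h)
    · exact (dvd_mul_left _ _).trans h
    · simpa using ((dvd_mul_left _ _).trans h).sub (dvd_refl (n : ℤ))

theorem Subgroup.isCyclic_closure_pair_iff {G : Type*} [Group G] {x y : G} :
    IsCyclic (closure {x, y}) ↔ ∃ g, x ∈ zpowers g ∧ y ∈ zpowers g := by
  constructor
  · rw [Subgroup.isCyclic_iff_exists_zpowers_eq_top]
    rintro ⟨g, hg⟩
    exact ⟨g, hg ▸ subset_closure (by simp), hg ▸ subset_closure (by simp)⟩
  · rintro ⟨g, hx, hy⟩
    refine isCyclic_of_le (H' := zpowers g) ?_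
    rw [closure_le, Set.insert_subset_iff, Set.singleton_subset_iff]
    exact ⟨hx, hy⟩

theorem Subgroup.commute_of_mem_zpowers {G : Type*} [Group G] {x y g : G}
    (hx : x ∈ zpowers g) (hy : y ∈ zpowers g) : Commute x y := by
  obtain ⟨k, rfl⟩ := mem_zpowers_iff.mp hx
  obtain ⟨l, rfl⟩ := mem_zpowers_iff.mp hy
  exact Commute.zpow_zpow_self g k l

namespace QuaternionGroup

variable {n : ℕ}

theorem a_one_zpow (k : ℤ) : (a 1 : QuaternionGroup n) ^ k = a k := by
  cases k with
  | ofNat k => simp [a_one_pow]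
  | negSucc k =>
    rw [zpow_negSucc, a_one_pow, Int.cast_negSucc]
    rfl

theorem a_mem_zpowers_a_one (i : ZMod (2 * n)) : a i ∈ Subgroup.zpowers (a 1) := by
  obtain ⟨k, rfl⟩ := ZMod.intCast_surjective i
  exact ⟨k, a_one_zpow k⟩

theorem a_n_mem_zpowers_xa (i : ZMod (2 * n)) : a n ∈ Subgroup.zpowers (xa i) :=
  xa_sq i ▸ Subgroup.npow_mem_zpowers _ 2

theorem commute_a_xa_iff {i j : ZMod (2 * n)} : Commute (a i) (xa j) ↔ i = 0 ∨ i = n := by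
  rw [← ZMod.add_self_eq_zero_iff, Commute, SemiconjBy, a_mul_xa, xa_mul_a, xa.injEq]
  constructor <;> intro h <;> linear_combination -h

theorem commute_xa_xa_iff {i j : ZMod (2 * n)} : Commute (xa i) (xa j) ↔ j = i ∨ j = i + n := by
  calc Commute (xa i) (xa j) ↔ (j - i) + (j - i) = 0 := by
        rw [Commute, SemiconjBy, xa_mul_xa, xa_mul_xa, a.injEq]
        constructor <;> intro h <;> linear_combination h
    _ ↔ j = i ∨ j = i + n := by
        rw [ZMod.add_self_eq_zero_iff, sub_eq_zero, sub_eq_iff_eq_add']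

theorem a_mem_zpowers_xa_of_commute {i j : ZMod (2 * n)} (h : Commute (a i) (xa j)) :
    a i ∈ Subgroup.zpowers (xa j) := by
  obtain rfl | rfl := commute_a_xa_iff.mp h
  · rw [a_zero]
    exact one_mem _
  · exact a_n_mem_zpowers_xa j

theorem exists_zpowers_of_commute {x y : QuaternionGroup n} (h : Commute x y) :
    ∃ g, x ∈ Subgroup.zpowers g ∧ y ∈ Subgroup.zpowers g := by
  rcases x with i | i <;> rcases y with j | j
  · exact ⟨a 1, a_mem_zpowers_a_one i, a_mem_zpowers_a_one j⟩
  · exact ⟨xa j, a_mem_zpowers_xa_of_commute h, Subgroup.mem_zpowers _⟩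
  · exact ⟨xa i, Subgroup.mem_zpowers _, a_mem_zpowers_xa_of_commute h.symm⟩
  · refine ⟨xa i, Subgroup.mem_zpowers _, ?_⟩
    obtain rfl | rfl := commute_xa_xa_iff.mp h
    · exact Subgroup.mem_zpowers _
    · rw [← xa_mul_a]
      exact mul_mem (Subgroup.mem_zpowers _) (a_n_mem_zpowers_xa i)

theorem commute_iff_isCyclic_closure_pair (x y : QuaternionGroup n) :
    Commute x y ↔ IsCyclic (Subgroup.closure {x, y}) := by
  rw [Subgroup.isCyclic_closure_pair_iff]
  exact ⟨exists_zpowers_of_commute, fun ⟨_, hx, hy⟩ ↦ Subgroup.commute_of_mem_zpowers hx hy⟩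

end QuaternionGroup

theorem stmt19_general (m : ℕ) :
    enhancedPowerGraph (QuaternionGroup m) = commutingGraph (QuaternionGroup m) ∧
      ∀ x y : QuaternionGroup m, x ≠ y →
        (x * y = y * x ↔ IsCyclic ↥(Subgroup.closure {x, y})) := by
  refine ⟨?_, fun x y _ ↦ QuaternionGroup.commute_iff_isCyclic_closure_pair x y⟩
  ext x y
  exact and_congr_right fun _ ↦ (QuaternionGroup.commute_iff_isCyclic_closure_pair x y).symm

/-- For m ≥ 2, the enhanced power graph of `Q_{4m}` equals its commuting graph: distinct
elements commute iff they generate a cyclic subgroup. -/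
theorem stmt19 (m : ℕ) (hm : 2 ≤ m) :
    enhancedPowerGraph (QuaternionGroup m) = commutingGraph (QuaternionGroup m) ∧
      ∀ x y : QuaternionGroup m, x ≠ y →
        (x * y = y * x ↔ IsCyclic ↥(Subgroup.closure {x, y})) :=
  stmt19_general m
end
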